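/- arXiv:2510.18274 — 2 statements merged into one kernel-verified Lean document; each statement's English description precedes it below -/
import Mathlib

section
/- Let G be an undirected unweighted graph with terminals s and t, and let F ⪯ G be a flow subgraph of value ν(F). Then for every partition (S, T) of the vertices with s ∈ S and t ∈ T, the number of edges of G crossing the cut equals ν(F) + w_{G_F}(S, T), where w_{G_F}(S,T) is the total weight of edges of the residual graph G_F directed (or undirected) from S to T. -/
open Finset

/-!
Each path of the decomposition starts in `S` and ends outside `S`, so it leaves `S` exactly
once more often than it enters it; summing over the paths, the edges of `F` directed from `S`
to `Sᶜ` outnumber those directed from `Sᶜ` to `S` by `ν(F)`. On the other hand, for every pair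
`(a, b)`, `c(a, b) + [(b, a) ∈ F] = [(a, b) ∈ F] + w_{G_F}(a, b)`; summing this over the cut
and cancelling gives the claim.
-/

/-- The list of consecutive (directed) edges of a walk given by its vertex list. -/
def walkEdges {V : Type*} (l : List V) : List (V × V) := l.zip l.tail

/-- The capacity function of the residual graph `G_F`: undirected unit edges of `G \ F`
(in both directions), together with the reverse of each edge of `F` with weight `2`. -/
def residualCap {V : Type*} [DecidableEq V] (cG : V → V → ℕ) (F : Finset (V × V))
    (a b : V) : ℕ :=
  (if cG a b = 1 ∧ (a, b) ∉ F ∧ (b, a) ∉ F then 1 else 0) + (if (b, a) ∈ F then 2 else 0)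

section Walks

variable {V : Type*} (p : V → Bool)

theorem walkEdges_cons_cons (a b : V) (l : List V) :
    walkEdges (a :: b :: l) = (a, b) :: walkEdges (b :: l) := rfl

theorem countP_walkEdges_exit_add_toNat_getLast (a : V) (l : List V) :
    (walkEdges (a :: l)).countP (fun e => p e.1 && !p e.2) +
        (p ((a :: l).getLast (List.cons_ne_nil a l))).toNat =
      (walkEdges (a :: l)).countP (fun e => !p e.1 && p e.2) + (p a).toNat := by
  induction l generalizing a with
  | nil => simp [walkEdges]
  | cons b l ih =>
    rw [walkEdges_cons_cons, List.countP_cons, List.countP_cons, List.getLast_cons_cons]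
    have := ih b
    cases p a <;> cases hb : p b <;> simp [hb] at this ⊢ <;> omega

theorem countP_walkEdges_exit_eq_enter_add_one {l : List V} {s t : V}
    (hs : l.head? = some s) (ht : l.getLast? = some t) (hps : p s) (hpt : p t = false) :
    (walkEdges l).countP (fun e => p e.1 && !p e.2) =
      (walkEdges l).countP (fun e => !p e.1 && p e.2) + 1 := by
  obtain ⟨l, rfl⟩ : ∃ l', l = s :: l' := List.head?_eq_some_iff.mp hs
  have key := countP_walkEdges_exit_add_toNat_getLast p s l
  rw [List.getLast?_eq_some_getLast (List.cons_ne_nil s l), Option.some_inj] at ht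
  rw [ht, hps, hpt] at key
  simpa using key

end Walks

theorem List.sum_count_filter_eq_countP {α : Type*} [BEq α] [LawfulBEq α] {F : Finset α}
    {l : List α} (hl : ∀ x ∈ l, x ∈ F) (q : α → Bool) :
    ∑ x ∈ F with q x, l.count x = l.countP q := by
  classical
  obtain rfl := lawful_beq_subsingleton ‹BEq α› instBEqOfDecidableEq
  have h := Multiset.sum_count_eq_card (s := {x ∈ F | q x}) (m := (l.filter q : Multiset α))
    (by simp +contextual [hl])
  rw [Multiset.coe_card, ← List.countP_eq_length_filter] at h
  rw [← h]
  refine sum_congr rfl fun x hx => ?_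
  rw [Multiset.coe_count, List.count_filter (Finset.mem_filter.mp hx).2]

theorem card_filter_eq_sum_countP_of_decomposition {ι α : Type*} [Fintype ι] [BEq α]
    [LawfulBEq α] {F : Finset α} {L : ι → List α} (hmem : ∀ i, ∀ x ∈ L i, x ∈ F)
    (hdecomp : ∀ x ∈ F, ∑ i, (L i).count x = 1) (q : α → Bool) :
    #{x ∈ F | q x} = ∑ i, (L i).countP q := by
  calc #{x ∈ F | q x}
      = ∑ x ∈ F with q x, ∑ i, (L i).count x := by
        rw [card_eq_sum_ones]
        exact sum_congr rfl fun x hx => (hdecomp x (mem_filter.mp hx).1).symm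
    _ = ∑ i, ∑ x ∈ F with q x, (L i).count x := sum_comm
    _ = ∑ i, (L i).countP q := sum_congr rfl fun i _ => List.sum_count_filter_eq_countP (hmem i) q

theorem card_filter_exit_eq_card_add_card_filter_enter {ι V : Type*} [Fintype ι] [BEq V]
    [LawfulBEq V] {F : Finset (V × V)} {paths : ι → List V} {s t : V}
    (hwalk : ∀ i, (paths i).head? = some s ∧ (paths i).getLast? = some t)
    (hmem : ∀ i, ∀ e ∈ walkEdges (paths i), e ∈ F)
    (hdecomp : ∀ e ∈ F, ∑ i, (walkEdges (paths i)).count e = 1)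
    (p : V → Bool) (hps : p s) (hpt : p t = false) :
    #{e ∈ F | p e.1 && !p e.2} = Fintype.card ι + #{e ∈ F | !p e.1 && p e.2} := by
  simp only [card_filter_eq_sum_countP_of_decomposition hmem hdecomp]
  rw [Fintype.card_eq_sum_ones, ← sum_add_distrib]
  refine sum_congr rfl fun i _ => ?_
  rw [add_comm]
  exact countP_walkEdges_exit_eq_enter_add_one p (hwalk i).1 (hwalk i).2 hps hpt

theorem sum_sum_ite_mem_eq_card_filter {V : Type*} [DecidableEq V] (A B : Finset V)
    (F : Finset (V × V)) :
    ∑ a ∈ A, ∑ b ∈ B, (if (a, b) ∈ F then 1 else 0) = #{e ∈ F | e.1 ∈ A ∧ e.2 ∈ B} := by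
  rw [← sum_product', sum_boole, Nat.cast_id]
  congr 1
  ext e
  simp only [mem_filter, mem_product]
  tauto

theorem cap_add_reverse_flow_eq_flow_add_residualCap {V : Type*} [DecidableEq V]
    {cG : V → V → ℕ} (hsym : ∀ a b, cG a b = cG b a) (h01 : ∀ a b, cG a b ≤ 1) {F : Finset (V × V)}
    (hFG : ∀ e ∈ F, cG e.1 e.2 = 1) (hFor : ∀ e ∈ F, (e.2, e.1) ∉ F) (a b : V) :
    cG a b + (if (b, a) ∈ F then 1 else 0) =
      (if (a, b) ∈ F then 1 else 0) + residualCap cG F a b := by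
  unfold residualCap
  by_cases hab : (a, b) ∈ F
  · simp [hab, hFor _ hab, hFG _ hab]
  by_cases hba : (b, a) ∈ F
  · simp [hab, hba, hsym a b, hFG _ hba]
  rcases Nat.le_one_iff_eq_zero_or_eq_one.mp (h01 a b) with h | h <;> simp [hab, hba, h]

theorem cut_value_via_residual_general {V : Type*} [Fintype V] [DecidableEq V] (s t : V)
    (cG : V → V → ℕ) (hsym : ∀ a b, cG a b = cG b a) (h01 : ∀ a b, cG a b ≤ 1)
    (F : Finset (V × V))
    (hFG : ∀ p ∈ F, cG p.1 p.2 = 1) (hFor : ∀ p ∈ F, (p.2, p.1) ∉ F)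
    (f : ℕ) (paths : Fin f → List V)
    (hwalk : ∀ i, (paths i).head? = some s ∧ (paths i).getLast? = some t)
    (hmem : ∀ i, ∀ p ∈ walkEdges (paths i), p ∈ F)
    (hdecomp : ∀ p ∈ F, (∑ i, (walkEdges (paths i)).count p) = 1) :
    ∀ S : Finset V, s ∈ S → t ∉ S →
      (∑ a ∈ S, ∑ b ∈ Sᶜ, cG a b) = f + ∑ a ∈ S, ∑ b ∈ Sᶜ, residualCap cG F a b := by
  intro S hs ht
  have hflow := card_filter_exit_eq_card_add_card_filter_enter hwalk hmem hdecomp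
    (fun v => decide (v ∈ S)) (by simpa) (by simpa)
  have hsum : ∑ a ∈ S, ∑ b ∈ Sᶜ, (cG a b + if (b, a) ∈ F then 1 else 0) =
      ∑ a ∈ S, ∑ b ∈ Sᶜ, ((if (a, b) ∈ F then 1 else 0) + residualCap cG F a b) :=
    sum_congr rfl fun a _ => sum_congr rfl fun b _ =>
      cap_add_reverse_flow_eq_flow_add_residualCap hsym h01 hFG hFor a b
  have hback : ∑ a ∈ S, ∑ b ∈ Sᶜ, (if (b, a) ∈ F then 1 else 0) =
      #{e ∈ F | e.1 ∈ Sᶜ ∧ e.2 ∈ S} := by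
    rw [sum_comm]
    exact sum_sum_ite_mem_eq_card_filter _ _ _
  simp only [sum_add_distrib, hback, sum_sum_ite_mem_eq_card_filter] at hsum
  simp only [Fintype.card_fin, Bool.and_eq_true, decide_eq_true_eq, Bool.not_eq_true',
    decide_eq_false_iff_not, mem_compl] at hflow hsum
  omega

/-- Let `G` be undirected and unweighted (symmetric `{0,1}` capacity
function `cG`) and let `F ⪯ G` be a flow subgraph of value `ν(F) = f` (its edges decompose
exactly into `f` edge-disjoint directed `s`–`t` paths).  Then for every `s`–`t` cut
`(S, Sᶜ)`, the number of edges of `G` crossing the cut equals `f` plus the total residual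
weight `w_{G_F}(S, Sᶜ)` directed from `S` to `Sᶜ`. -/
theorem cut_value_via_residual {V : Type*} [Fintype V] [DecidableEq V] (s t : V)
    (cG : V → V → ℕ) (hsym : ∀ a b, cG a b = cG b a) (h01 : ∀ a b, cG a b ≤ 1)
    (hloop : ∀ a, cG a a = 0)
    (F : Finset (V × V))
    (hFG : ∀ p ∈ F, cG p.1 p.2 = 1) (hFor : ∀ p ∈ F, (p.2, p.1) ∉ F)
    (f : ℕ) (paths : Fin f → List V)
    (hwalk : ∀ i, (paths i).head? = some s ∧ (paths i).getLast? = some t)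
    (hmem : ∀ i, ∀ p ∈ walkEdges (paths i), p ∈ F)
    (hdecomp : ∀ p ∈ F, (∑ i, (walkEdges (paths i)).count p) = 1) :
    ∀ S : Finset V, s ∈ S → t ∉ S →
      (∑ a ∈ S, ∑ b ∈ Sᶜ, cG a b) = f + ∑ a ∈ S, ∑ b ∈ Sᶜ, residualCap cG F a b :=
  cut_value_via_residual_general s t cG hsym h01 F hFG hFor f paths hwalk hmem hdecomp
end

section
/- Let G = G_A ∪ G_B be an undirected unweighted graph on vertex set V with terminals s,t, let F be an explicitly given directed weighted graph on V, and set 𝒢 = (G_A ∪ G_B) ∪ F as a mixed graph. Let k ≥ ν(𝒢) + 1, let P_A, P_B be k-forest packings of G_A, G_B respectively, and set 𝒫 = (P_A ∪ P_B) ∪ F. Then ν(𝒢) = ν(𝒫), and a cut (S,T) is a minimum s–t cut of 𝒢 if and only if it is a minimum s–t cut of 𝒫. -/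
open Finset

variable {V : Type*} [Fintype V] [DecidableEq V]

open scoped Classical in
/-- The number of edges of `H` crossing the partition `(S, Sᶜ)`. -/
noncomputable def crossCount (H : SimpleGraph V) (S : Finset V) : ℕ :=
  ∑ a ∈ S, ∑ b ∈ Sᶜ, if H.Adj a b then 1 else 0

/-- The value of the cut `(S, Sᶜ)` in the mixed graph consisting of the undirected
unweighted graph `G` and the directed weighted graph `F`: undirected crossing edges
count with weight `1`, and directed edges from `S` to `Sᶜ` count with their weights. -/
noncomputable def mixedCutVal (G : SimpleGraph V) (F : V → V → ℕ) (S : Finset V) : ℕ :=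
  crossCount G S + ∑ a ∈ S, ∑ b ∈ Sᶜ, F a b

/-- The minimum `s`–`t` cut value of the mixed graph `(G, F)`. -/
noncomputable def minCutVal (G : SimpleGraph V) (F : V → V → ℕ) (s t : V) : ℕ :=
  sInf {w | ∃ S : Finset V, s ∈ S ∧ t ∉ S ∧ mixedCutVal G F S = w}

/-- `F` is a spanning forest of `G`. -/
def IsSpanningForestOf (F G : SimpleGraph V) : Prop :=
  F ≤ G ∧ F.IsAcyclic ∧ ∀ a b, G.Adj a b → F.Reachable a b

/-- `P` is a `k`-forest packing of `G`. -/
def IsKForestPacking (k : ℕ) (G P : SimpleGraph V) : Prop :=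
  ∃ F : Fin k → SimpleGraph V,
    P = (⨆ i, F i) ∧
    ∀ i : Fin k, IsSpanningForestOf (F i) (G \ ⨆ j : Fin k, ⨆ _ : j < i, F j)

/-!
Every forest `Fᵢ` of a `k`-forest packing `P` of `G` is a spanning forest of what the earlier
forests left of `G`, so if an edge `ab` of `G` is missing from `P`, then each of the `k`
edge-disjoint forests joins `a` to `b` and thus crosses every cut separating `a` from `b`.
Hence a cut of the packed mixed graph either has the same value as in `𝒢` or has value at
least `k > ν(𝒢)`; since packing only deletes edges, minimum values and minimum cuts agree.
-/

lemma SimpleGraph.Reachable.exists_adj_of_mem_of_notMem {α : Type*} {G : SimpleGraph α}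
    {S : Set α} {a b : α} (h : G.Reachable a b) (ha : a ∈ S) (hb : b ∉ S) :
    ∃ x ∈ S, ∃ y ∉ S, G.Adj x y := by
  obtain ⟨p⟩ := h
  obtain ⟨d, -, hd₁, hd₂⟩ := p.exists_boundary_dart S ha hb
  exact ⟨d.fst, hd₁, d.snd, hd₂, d.adj⟩

lemma Nat.sInf_image_eq_of_le_of_min_le {ι : Type*} {C : Set ι} {f g : ι → ℕ} {k : ℕ}
    (hgf : ∀ i ∈ C, g i ≤ f i) (hfg : ∀ i ∈ C, min k (f i) ≤ g i) (hk : sInf (f '' C) < k) :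
    sInf (f '' C) = sInf (g '' C) := by
  rcases C.eq_empty_or_nonempty with rfl | hC
  · simp
  refine le_antisymm (le_csInf (hC.image g) ?_) (le_csInf (hC.image f) ?_)
  · rintro _ ⟨i, hi, rfl⟩
    have := Nat.sInf_le (Set.mem_image_of_mem f hi)
    have := hfg i hi
    omega
  · rintro _ ⟨i, hi, rfl⟩
    exact (Nat.sInf_le (Set.mem_image_of_mem g hi)).trans (hgf i hi)

lemma Nat.eq_sInf_image_iff_of_le_of_min_le {ι : Type*} {C : Set ι} {f g : ι → ℕ} {k : ℕ}
    (hgf : ∀ i ∈ C, g i ≤ f i) (hfg : ∀ i ∈ C, min k (f i) ≤ g i) (hk : sInf (f '' C) < k)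
    {i : ι} (hi : i ∈ C) :
    f i = sInf (f '' C) ↔ g i = sInf (g '' C) := by
  have heq := Nat.sInf_image_eq_of_le_of_min_le hgf hfg hk
  have := Nat.sInf_le (Set.mem_image_of_mem f hi)
  have := Nat.sInf_le (Set.mem_image_of_mem g hi)
  have := hgf i hi
  have := hfg i hi
  omega

open scoped Classical in
lemma crossCount_eq_card (H : SimpleGraph V) (S : Finset V) :
    crossCount H S = #{p ∈ S ×ˢ Sᶜ | H.Adj p.1 p.2} := by
  rw [crossCount, card_filter, sum_product]

lemma crossCount_le_crossCount {H H' : SimpleGraph V} {S : Finset V}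
    (h : ∀ a ∈ S, ∀ b ∉ S, H.Adj a b → H'.Adj a b) :
    crossCount H S ≤ crossCount H' S := by
  classical
  simp only [crossCount_eq_card]
  refine card_le_card fun p hp => ?_
  simp only [mem_filter, mem_product, mem_compl] at hp ⊢
  exact ⟨hp.1, h _ hp.1.1 _ hp.1.2 hp.2⟩

lemma crossCount_mono {H H' : SimpleGraph V} (h : H ≤ H') (S : Finset V) :
    crossCount H S ≤ crossCount H' S :=
  crossCount_le_crossCount fun _ _ _ _ hab => h hab

lemma mixedCutVal_mono {H H' : SimpleGraph V} (h : H ≤ H') (F : V → V → ℕ) (S : Finset V) :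
    mixedCutVal H F S ≤ mixedCutVal H' F S :=
  Nat.add_le_add_right (crossCount_mono h S) _

lemma minCutVal_eq_sInf_image (G : SimpleGraph V) (F : V → V → ℕ) (s t : V) :
    minCutVal G F s t = sInf (mixedCutVal G F '' {S | s ∈ S ∧ t ∉ S}) := by
  simp only [minCutVal, Set.image, Set.mem_ofPred_eq, and_assoc]

lemma card_le_crossCount_of_pairwise_disjoint {ι : Type*} [Fintype ι] {H : SimpleGraph V}
    {S : Finset V} (F : ι → SimpleGraph V) (hdisj : Pairwise fun i j => Disjoint (F i) (F j))
    (hle : ∀ i, F i ≤ H) (hcross : ∀ i, ∃ x ∈ S, ∃ y ∉ S, (F i).Adj x y) :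
    Fintype.card ι ≤ crossCount H S := by
  classical
  choose x hx y hy hadj using hcross
  have hinj : Function.Injective fun i => (x i, y i) := by
    intro i j hij
    simp only [Prod.mk.injEq] at hij
    by_contra hne
    exact SimpleGraph.disjoint_left.mp (hdisj hne) _ _ (hadj i) (hij.1 ▸ hij.2 ▸ hadj j)
  rw [crossCount_eq_card, ← card_univ]
  refine card_le_card_of_injOn _ (fun i _ => ?_) hinj.injOn
  simp only [coe_filter, Set.mem_ofPred_eq, mem_product, mem_compl]
  exact ⟨⟨hx i, hy i⟩, hle i (hadj i)⟩

lemma IsKForestPacking.le {α : Type*} {k : ℕ} {G P : SimpleGraph α}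
    (hP : IsKForestPacking k G P) : P ≤ G := by
  obtain ⟨F, rfl, hF⟩ := hP
  exact iSup_le fun i => (hF i).1.trans sdiff_le

lemma IsKForestPacking.le_crossCount_of_not_adj {k : ℕ} {G P : SimpleGraph V}
    (hP : IsKForestPacking k G P) {S : Finset V} {a b : V} (ha : a ∈ S) (hb : b ∉ S)
    (hG : G.Adj a b) (hnP : ¬P.Adj a b) : k ≤ crossCount P S := by
  obtain ⟨F, rfl, hF⟩ := hP
  have hearlier_le (i : Fin k) : (⨆ j : Fin k, ⨆ _ : j < i, F j) ≤ ⨆ j, F j :=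
    iSup_le fun j => iSup_le fun _ => le_iSup F j
  have hdisj_earlier {i j : Fin k} (hji : j < i) : Disjoint (F i) (F j) :=
    disjoint_sdiff_self_left.mono (hF i).1 (le_iSup₂ (f := fun j (_ : j < i) => F j) j hji)
  have hdisj : Pairwise fun i j => Disjoint (F i) (F j) := fun i j hij =>
    hij.lt_or_gt.elim (fun h => (hdisj_earlier h).symm) hdisj_earlier
  have hcross (i : Fin k) : ∃ x ∈ S, ∃ y ∉ S, (F i).Adj x y := by
    have hreach : (F i).Reachable a b :=
      (hF i).2.2 a b ⟨hG, fun h => hnP (hearlier_le i h)⟩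
    simpa using hreach.exists_adj_of_mem_of_notMem (S := (S : Set V)) ha (by simpa using hb)
  simpa using card_le_crossCount_of_pairwise_disjoint F hdisj (le_iSup F) hcross

lemma min_le_crossCount_of_not_adj {k : ℕ} {G P : SimpleGraph V} {S : Finset V}
    (h : ∀ a ∈ S, ∀ b ∉ S, G.Adj a b → ¬P.Adj a b → k ≤ crossCount P S) :
    min k (crossCount G S) ≤ crossCount P S := by
  by_cases hall : ∀ a ∈ S, ∀ b ∉ S, G.Adj a b → P.Adj a b
  · exact (min_le_right _ _).trans (crossCount_le_crossCount hall)
  · push Not at hall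
    obtain ⟨a, ha, b, hb, hG, hnP⟩ := hall
    exact (min_le_left _ _).trans (h a ha b hb hG hnP)

lemma min_le_mixedCutVal_sup {k : ℕ} {GA GB PA PB : SimpleGraph V}
    (hPA : IsKForestPacking k GA PA) (hPB : IsKForestPacking k GB PB) (F : V → V → ℕ)
    (S : Finset V) : min k (mixedCutVal (GA ⊔ GB) F S) ≤ mixedCutVal (PA ⊔ PB) F S := by
  have hcross : min k (crossCount (GA ⊔ GB) S) ≤ crossCount (PA ⊔ PB) S := by
    refine min_le_crossCount_of_not_adj fun a ha b hb hG hnP => ?_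
    rw [SimpleGraph.sup_adj, not_or] at hnP
    rcases hG with hA | hB
    · exact (hPA.le_crossCount_of_not_adj ha hb hA hnP.1).trans (crossCount_mono le_sup_left S)
    · exact (hPB.le_crossCount_of_not_adj ha hb hB hnP.2).trans (crossCount_mono le_sup_right S)
  unfold mixedCutVal
  omega

/-- Let `𝒢 = (G_A ∪ G_B) ∪ F` be a mixed graph, `k ≥ ν(𝒢) + 1`, and
`P_A, P_B` be `k`-forest packings of `G_A, G_B`.  Set `𝒫 = (P_A ∪ P_B) ∪ F`.  Then
`ν(𝒢) = ν(𝒫)` and an `s`–`t` cut is minimum in `𝒢` iff it is minimum in `𝒫`. -/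
theorem forest_packing_preserves_mincut (s t : V)
    (GA GB : SimpleGraph V) (F : V → V → ℕ) (k : ℕ)
    (hk : minCutVal (GA ⊔ GB) F s t + 1 ≤ k)
    (PA PB : SimpleGraph V)
    (hPA : IsKForestPacking k GA PA) (hPB : IsKForestPacking k GB PB) :
    minCutVal (GA ⊔ GB) F s t = minCutVal (PA ⊔ PB) F s t ∧
    ∀ S : Finset V, s ∈ S → t ∉ S →
      (mixedCutVal (GA ⊔ GB) F S = minCutVal (GA ⊔ GB) F s t ↔
        mixedCutVal (PA ⊔ PB) F S = minCutVal (PA ⊔ PB) F s t) := by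
  have hle (S : Finset V) (_ : S ∈ {S | s ∈ S ∧ t ∉ S}) :
      mixedCutVal (PA ⊔ PB) F S ≤ mixedCutVal (GA ⊔ GB) F S :=
    mixedCutVal_mono (sup_le_sup hPA.le hPB.le) F S
  have hmin (S : Finset V) (_ : S ∈ {S | s ∈ S ∧ t ∉ S}) :
      min k (mixedCutVal (GA ⊔ GB) F S) ≤ mixedCutVal (PA ⊔ PB) F S :=
    min_le_mixedCutVal_sup hPA hPB F S
  rw [minCutVal_eq_sInf_image, Nat.add_one_le_iff] at hk
  simp only [minCutVal_eq_sInf_image]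
  exact ⟨Nat.sInf_image_eq_of_le_of_min_le hle hmin hk,
    fun S hs ht => Nat.eq_sInf_image_iff_of_le_of_min_le hle hmin hk ⟨hs, ht⟩⟩
end
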